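/- arXiv:1505.05455 — 4 statements merged into one kernel-verified Lean document; each statement's English description precedes it below -/
import Mathlib

section
/- Let ρ = ∑_{k=1}^m p_k ρ^a_k ⊗ ρ^b_k be a separable density matrix on ℂ^{n_a}⊗ℂ^{n_b}, where (p_k) is a probability distribution and ρ^a_k, ρ^b_k are density matrices on ℂ^{n_a}, ℂ^{n_b} respectively. Then there exists a classical state σ on (ℂ^{n_a}⊗ℂ^m)⊗(ℂ^{n_b}⊗ℂ^m) whose partial trace over the two ℂ^m factors equals ρ; explicitly, σ = ∑_{k=1}^m p_k (ρ^a_k ⊗ |k⟩⟨k|) ⊗ (ρ^b_k ⊗ |k⟩⟨k|) is such a classical extension, where {|k⟩} is the standard basis of ℂ^m. -/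
open Matrix Kronecker BigOperators ComplexOrder

/-- A density matrix: positive semidefinite with trace 1. -/
def IsDensityMatrix {n : Type*} [Fintype n] (ρ : Matrix n n ℂ) : Prop :=
  ρ.PosSemidef ∧ ρ.trace = 1

/-- A classical (classically correlated) state on `ℂ^{n_A} ⊗ ℂ^{n_B}`:
    `σ = ∑_{i,j} p_{ij} |α_i⟩⟨α_i| ⊗ |β_j⟩⟨β_j|` for orthonormal bases `{α_i}`, `{β_j}`
    and a probability distribution `(p_{ij})`. -/
def IsClassicalState {nA nB : Type*} [Fintype nA] [Fintype nB] [DecidableEq nA] [DecidableEq nB]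
    (σ : Matrix (nA × nB) (nA × nB) ℂ) : Prop :=
  ∃ (α : nA → nA → ℂ) (β : nB → nB → ℂ) (p : nA → nB → ℝ),
    (∀ i j, star (α i) ⬝ᵥ α j = if i = j then (1 : ℂ) else 0) ∧
    (∀ i j, star (β i) ⬝ᵥ β j = if i = j then (1 : ℂ) else 0) ∧
    (∀ i j, 0 ≤ p i j) ∧ (∑ i, ∑ j, p i j = 1) ∧
    σ = ∑ i, ∑ j, (p i j : ℂ) •
        (vecMulVec (α i) (star (α i)) ⊗ₖ vecMulVec (β j) (star (β j)))

/-- Partial trace over the second and fourth tensor factors of a matrix on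
    `(ℂ^a ⊗ ℂ^b) ⊗ (ℂ^c ⊗ ℂ^d)`, tracing out the `b` and `d` factors. -/
noncomputable def trOutAncillas {a b c d : Type*} [Fintype b] [Fintype d]
    (X : Matrix ((a × b) × (c × d)) ((a × b) × (c × d)) ℂ) :
    Matrix (a × c) (a × c) ℂ :=
  fun p q => ∑ k : b, ∑ l : d, X ((p.1, k), (p.2, l)) ((q.1, k), (q.2, l))

/-!
Diagonalise each `ρa k = ∑ i, s k i • |u k i⟩⟨u k i|` and `ρb k = ∑ j, t k j • |v k j⟩⟨v k j|`.
The tagged vectors `u k i ⊗ |k⟩` form an orthonormal family indexed by all pairs `(i, k)`, because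
vectors with different tags are orthogonal; likewise `v k j ⊗ |k⟩`. In these two bases the
extension `σ` has weight `p k * s k i * t k j` on pairs of basis vectors with the same tag `k` and
weight `0` on all other pairs, so it is classical. Tracing out the tags recovers `ρ` since
`tr |k⟩⟨k| = 1`.
-/

def IsOrthonormalFamily {ι n : Type*} [Fintype n] [DecidableEq ι] (v : ι → n → ℂ) : Prop :=
  ∀ i j, star (v i) ⬝ᵥ v j = if i = j then 1 else 0

namespace Matrix

variable {n : Type*} [Fintype n] [DecidableEq n]

theorem IsHermitian.isOrthonormalFamily_eigenvectorBasis {A : Matrix n n ℂ} (hA : A.IsHermitian) :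
    IsOrthonormalFamily fun i => ⇑(hA.eigenvectorBasis i) := by
  intro i j
  rw [dotProduct_comm, ← EuclideanSpace.inner_eq_star_dotProduct]
  exact orthonormal_iff_ite.mp hA.eigenvectorBasis.orthonormal i j

theorem IsHermitian.eq_sum_eigenvalues_smul_vecMulVec {A : Matrix n n ℂ} (hA : A.IsHermitian) :
    A = ∑ i, (hA.eigenvalues i : ℂ) •
      vecMulVec ⇑(hA.eigenvectorBasis i) (star ⇑(hA.eigenvectorBasis i)) := by
  conv_lhs => rw [hA.spectral_theorem, Unitary.conjStarAlgAut_apply]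
  ext p q
  simp [Matrix.mul_apply, Matrix.sum_apply, vecMulVec_apply, diagonal_apply, mul_comm, mul_assoc]

end Matrix

theorem IsDensityMatrix.exists_eq_sum_smul_vecMulVec {n : Type*} [Fintype n] [DecidableEq n]
    {ρ : Matrix n n ℂ} (hρ : IsDensityMatrix ρ) :
    ∃ (v : n → n → ℂ) (w : n → ℝ), IsOrthonormalFamily v ∧ (∀ i, 0 ≤ w i) ∧ ∑ i, w i = 1 ∧
      ρ = ∑ i, (w i : ℂ) • vecMulVec (v i) (star (v i)) := by
  obtain ⟨hpsd, htr⟩ := hρ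
  refine ⟨_, _, hpsd.1.isOrthonormalFamily_eigenvectorBasis, hpsd.eigenvalues_nonneg, ?_,
    hpsd.1.eq_sum_eigenvalues_smul_vecMulVec⟩
  have h : ∑ i, (hpsd.1.eigenvalues i : ℂ) = 1 := hpsd.1.trace_eq_sum_eigenvalues.symm.trans htr
  exact_mod_cast h

def vecKron {m n α : Type*} [Mul α] (v : m → α) (w : n → α) : m × n → α :=
  fun x => v x.1 * w x.2

section vecKron

variable {m n α : Type*}

theorem star_vecKron [CommMagma α] [StarMul α] (v : m → α) (w : n → α) :
    star (vecKron v w) = vecKron (star v) (star w) := by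
  ext x
  simp [vecKron]

theorem vecKron_dotProduct_vecKron [Fintype m] [Fintype n] [CommSemiring α]
    (v v' : m → α) (w w' : n → α) :
    vecKron v w ⬝ᵥ vecKron v' w' = (v ⬝ᵥ v') * (w ⬝ᵥ w') := by
  simp only [dotProduct, vecKron, Fintype.sum_prod_type, Finset.sum_mul_sum]
  exact Finset.sum_congr rfl fun _ _ => Finset.sum_congr rfl fun _ _ => by ring

theorem vecMulVec_vecKron [CommSemiring α] (v v' : m → α) (w w' : n → α) :
    vecMulVec (vecKron v w) (vecKron v' w') = vecMulVec v v' ⊗ₖ vecMulVec w w' := by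
  ext x y
  simp only [vecMulVec_apply, vecKron, kroneckerMap_apply]
  ring

end vecKron

theorem IsOrthonormalFamily.vecKron_single {ι m n : Type*} [Fintype m] [Fintype n]
    [DecidableEq ι] [DecidableEq m] {u : m → ι → n → ℂ} (hu : ∀ k, IsOrthonormalFamily (u k)) :
    IsOrthonormalFamily fun x : ι × m => vecKron (u x.2 x.1) (Pi.single x.2 1) := by
  rintro ⟨i, k⟩ ⟨j, l⟩
  rw [star_vecKron, vecKron_dotProduct_vecKron, Pi.star_single, star_one, single_one_dotProduct,
    Pi.single_apply]
  by_cases hkl : k = l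
  · subst hkl
    simp [hu k i j]
  · simp [hkl]

theorem sum_smul_vecMulVec_kronecker_single {ι m n : Type*} [Fintype ι] [Fintype n]
    [DecidableEq m] (c : ι → ℂ) (v : ι → n → ℂ) (k : m) :
    (∑ i, c i • vecMulVec (v i) (star (v i))) ⊗ₖ single k k (1 : ℂ) =
      ∑ i, c i • vecMulVec (vecKron (v i) (Pi.single k 1))
        (star (vecKron (v i) (Pi.single k 1))) := by
  simp_rw [star_vecKron, vecMulVec_vecKron, Pi.star_single, star_one,
    ← single_eq_single_vecMulVec_single]
  ext x y
  simp [Matrix.sum_apply, kroneckerMap_apply, Finset.sum_mul, mul_assoc]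

section kronecker

variable {l m n p ι α : Type*} [NonUnitalNonAssocSemiring α]

theorem sum_kronecker (s : Finset ι) (A : ι → Matrix l m α) (B : Matrix n p α) :
    (∑ i ∈ s, A i) ⊗ₖ B = ∑ i ∈ s, A i ⊗ₖ B := by
  ext
  simp [kroneckerMap_apply, Matrix.sum_apply, Finset.sum_mul]

theorem kronecker_sum (s : Finset ι) (A : Matrix l m α) (B : ι → Matrix n p α) :
    A ⊗ₖ (∑ i ∈ s, B i) = ∑ i ∈ s, A ⊗ₖ B i := by
  ext
  simp [kroneckerMap_apply, Matrix.sum_apply, Finset.mul_sum]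

end kronecker

theorem Fintype.sum_prod_sum_prod_ite_snd_eq {ι κ m M : Type*} [Fintype ι] [Fintype κ]
    [Fintype m] [DecidableEq m] [AddCommMonoid M] (f : ι × m → κ × m → M) :
    ∑ x : ι × m, ∑ y : κ × m, (if x.2 = y.2 then f x y else 0) =
      ∑ k, ∑ i, ∑ j, f (i, k) (j, k) := by
  simp only [Fintype.sum_prod_type (f := fun y : κ × m => ite _ _ _), Finset.sum_ite_eq,
    Finset.mem_univ, if_true]
  rw [Fintype.sum_prod_type_right]

theorem isClassicalState_sum_kronecker_single {na nb m : Type*} [Fintype na] [Fintype nb]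
    [Fintype m] [DecidableEq na] [DecidableEq nb] [DecidableEq m]
    (p : m → ℝ) (hp0 : ∀ k, 0 ≤ p k) (hp1 : ∑ k, p k = 1)
    (ρa : m → Matrix na na ℂ) (ρb : m → Matrix nb nb ℂ)
    (hρa : ∀ k, IsDensityMatrix (ρa k)) (hρb : ∀ k, IsDensityMatrix (ρb k)) :
    IsClassicalState
      (∑ k, (p k : ℂ) • ((ρa k ⊗ₖ single k k (1 : ℂ)) ⊗ₖ (ρb k ⊗ₖ single k k (1 : ℂ)))) := by
  choose u s hu hs0 hs1 hρa using fun k => (hρa k).exists_eq_sum_smul_vecMulVec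
  choose v t hv ht0 ht1 hρb using fun k => (hρb k).exists_eq_sum_smul_vecMulVec
  let q (x : na × m) (y : nb × m) : ℝ := if x.2 = y.2 then p x.2 * s x.2 x.1 * t x.2 y.1 else 0
  refine ⟨_, _, q, IsOrthonormalFamily.vecKron_single hu, IsOrthonormalFamily.vecKron_single hv,
    ?_, ?_, ?_⟩
  · rintro ⟨i, k⟩ ⟨j, l⟩
    dsimp only [q]
    split_ifs
    · exact mul_nonneg (mul_nonneg (hp0 k) (hs0 k i)) (ht0 k j)
    · exact le_rfl
  · simp only [q, Fintype.sum_prod_sum_prod_ite_snd_eq, ← Finset.mul_sum, hs1, ht1, mul_one, hp1]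
  · simp only [q, apply_ite Complex.ofReal, Complex.ofReal_zero, ite_smul, zero_smul,
      Fintype.sum_prod_sum_prod_ite_snd_eq, hρa, hρb, sum_smul_vecMulVec_kronecker_single]
    simp only [sum_kronecker, kronecker_sum, smul_kronecker, kronecker_smul, Finset.smul_sum,
      smul_smul, Complex.ofReal_mul]
    refine Finset.sum_congr rfl fun k _ => Finset.sum_comm.trans ?_
    simp only [mul_assoc, mul_comm ((t k _ : ℝ) : ℂ)]

theorem trOutAncillas_kronecker {a b c d : Type*} [Fintype b] [Fintype d]
    (A : Matrix a a ℂ) (B : Matrix b b ℂ) (C : Matrix c c ℂ) (D : Matrix d d ℂ) :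
    trOutAncillas ((A ⊗ₖ B) ⊗ₖ (C ⊗ₖ D)) = (B.trace * D.trace) • (A ⊗ₖ C) := by
  ext x y
  simp only [trOutAncillas, kroneckerMap_apply, trace, diag_apply, Matrix.smul_apply, smul_eq_mul]
  rw [Finset.sum_mul_sum, Finset.sum_mul]
  refine Finset.sum_congr rfl fun _ _ => ?_
  rw [Finset.sum_mul]
  exact Finset.sum_congr rfl fun _ _ => by ring

theorem trOutAncillas_sum {ι a b c d : Type*} [Fintype b] [Fintype d] (s : Finset ι)
    (X : ι → Matrix ((a × b) × (c × d)) ((a × b) × (c × d)) ℂ) :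
    trOutAncillas (∑ i ∈ s, X i) = ∑ i ∈ s, trOutAncillas (X i) := by
  ext x y
  simp only [trOutAncillas, Matrix.sum_apply]
  conv_rhs => rw [Finset.sum_comm]
  refine Finset.sum_congr rfl fun _ _ => ?_
  rw [Finset.sum_comm]

theorem trOutAncillas_smul {a b c d : Type*} [Fintype b] [Fintype d] (r : ℂ)
    (X : Matrix ((a × b) × (c × d)) ((a × b) × (c × d)) ℂ) :
    trOutAncillas (r • X) = r • trOutAncillas X := by
  ext x y
  simp [trOutAncillas, Finset.mul_sum]

theorem trOutAncillas_sum_kronecker_single {a c m : Type*} [Fintype m] [DecidableEq m]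
    (r : m → ℂ) (A : m → Matrix a a ℂ) (B : m → Matrix c c ℂ) :
    trOutAncillas (∑ k, r k • ((A k ⊗ₖ single k k (1 : ℂ)) ⊗ₖ (B k ⊗ₖ single k k (1 : ℂ)))) =
      ∑ k, r k • (A k ⊗ₖ B k) := by
  simp [trOutAncillas_sum, trOutAncillas_smul, trOutAncillas_kronecker, trace_single_eq_same]

/-- Every separable density matrix
    `ρ = ∑_{k=1}^m p_k ρ^a_k ⊗ ρ^b_k` on `ℂ^{n_a} ⊗ ℂ^{n_b}` admits a classical
    extension: the state `σ = ∑_k p_k (ρ^a_k ⊗ |k⟩⟨k|) ⊗ (ρ^b_k ⊗ |k⟩⟨k|)` on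
    `(ℂ^{n_a} ⊗ ℂ^m) ⊗ (ℂ^{n_b} ⊗ ℂ^m)` is a classical state whose partial trace over
    the two `ℂ^m` factors equals `ρ`. -/
theorem separable_has_classical_extension
    (na nb m : ℕ)
    (p : Fin m → ℝ)
    (hp0 : ∀ k, 0 ≤ p k) (hp1 : ∑ k, p k = 1)
    (ρa : Fin m → Matrix (Fin na) (Fin na) ℂ)
    (ρb : Fin m → Matrix (Fin nb) (Fin nb) ℂ)
    (hρa : ∀ k, IsDensityMatrix (ρa k))
    (hρb : ∀ k, IsDensityMatrix (ρb k))
    (ρ : Matrix (Fin na × Fin nb) (Fin na × Fin nb) ℂ)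
    (hρ : ρ = ∑ k, (p k : ℂ) • (ρa k ⊗ₖ ρb k)) :
    (∃ σ : Matrix ((Fin na × Fin m) × (Fin nb × Fin m))
               ((Fin na × Fin m) × (Fin nb × Fin m)) ℂ,
        IsClassicalState σ ∧ trOutAncillas σ = ρ) ∧
    IsClassicalState
      (∑ k, (p k : ℂ) •
        ((ρa k ⊗ₖ Matrix.single k k (1 : ℂ)) ⊗ₖ
         (ρb k ⊗ₖ Matrix.single k k (1 : ℂ)))) ∧
    trOutAncillas
      (∑ k, (p k : ℂ) •
        ((ρa k ⊗ₖ Matrix.single k k (1 : ℂ)) ⊗ₖ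
         (ρb k ⊗ₖ Matrix.single k k (1 : ℂ)))) = ρ := by
  have hclassical := isClassicalState_sum_kronecker_single p hp0 hp1 ρa ρb hρa hρb
  have htrace := (trOutAncillas_sum_kronecker_single (fun k => (p k : ℂ)) ρa ρb).trans hρ.symm
  exact ⟨⟨_, hclassical, htrace⟩, hclassical, htrace⟩
end

section
/- Let σ be a density matrix on ℂ^{d₁}⊗ℂ^{d₂}, let ρ₁ be its partial trace over the second factor and ρ₂ its partial trace over the first factor. Then W(σ) ≥ W(ρ₁) + W(ρ₂), i.e. log₂(d₁d₂) − S(σ) ≥ (log₂ d₁ − S(ρ₁)) + (log₂ d₂ − S(ρ₂)); equivalently, the accessible information i(τ) = log₂ d − S(τ) satisfies the hybrid monogamy relation i(σ) ≥ i(ρ₁) + i(ρ₂). -/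
open Matrix BigOperators ComplexOrder

/-!
Let `μ` be the diagonal of `σ` in the product of eigenbases of `ρ₁` and `ρ₂`: a probability
distribution on pairs whose marginals are the spectra of `ρ₁` and `ρ₂`. The diagonal of a
Hermitian matrix in any orthonormal basis is the image of its spectrum under the doubly stochastic
matrix of squared overlaps `|⟨bᵢ, eⱼ⟩|²`, so concavity of `-x log x` gives `S(σ) ≤ H(μ)`.
Classical subadditivity of the Shannon entropy `H`, i.e. Gibbs' inequality for `μ` against the
product of its marginals, bounds `H(μ)` by `S(ρ₁) + S(ρ₂)`.
-/

/-- The von Neumann entropy (in bits) of a matrix: `S(ρ) = −∑ᵢ λᵢ log₂ λᵢ` where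
    `(λᵢ)` are the eigenvalues (with multiplicity) of the Hermitian matrix `ρ`,
    with the convention `0·log₂ 0 = 0` (guaranteed by `Real.logb 2 0 = 0`). -/
noncomputable def vnEntropy {n : Type*} [Fintype n] [DecidableEq n]
    (ρ : Matrix n n ℂ) : ℝ :=
  if h : ρ.IsHermitian then -∑ i, h.eigenvalues i * Real.logb 2 (h.eigenvalues i) else 0

/-- Partial trace over the second tensor factor. -/
noncomputable def trSecond {m n : Type*} [Fintype n]
    (X : Matrix (m × n) (m × n) ℂ) : Matrix m m ℂ :=
  fun i j => ∑ k : n, X (i, k) (j, k)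

/-- Partial trace over the first tensor factor. -/
noncomputable def trFirst {m n : Type*} [Fintype m]
    (X : Matrix (m × n) (m × n) ℂ) : Matrix n n ℂ :=
  fun i j => ∑ k : m, X (k, i) (k, j)

open Kronecker Real

theorem ConcaveOn.sum_le_sum_mulVec_of_mem_doublyStochastic {n : Type*} [Fintype n]
    [DecidableEq n] {s : Set ℝ} {f : ℝ → ℝ} (hf : ConcaveOn ℝ s f) {D : Matrix n n ℝ}
    (hD : D ∈ doublyStochastic ℝ n) {x : n → ℝ} (hx : ∀ j, x j ∈ s) :
    ∑ j, f (x j) ≤ ∑ i, f ((D *ᵥ x) i) := by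
  obtain ⟨hD_nonneg, hD_row, hD_col⟩ := mem_doublyStochastic_iff_sum.mp hD
  calc ∑ j, f (x j) = ∑ i, ∑ j, D i j * f (x j) := by
        rw [Finset.sum_comm]; simp [← Finset.sum_mul, hD_col]
    _ ≤ ∑ i, f ((D *ᵥ x) i) := Finset.sum_le_sum fun i _ => by
        simpa [mulVec, dotProduct] using
          hf.le_map_sum (fun j _ => hD_nonneg i j) (hD_row i) (fun j _ => hx j)

theorem mul_log_sub_log_le_sub {a b : ℝ} (ha : 0 ≤ a) (hb : 0 ≤ b) (hab : b = 0 → a = 0) :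
    a * (log b - log a) ≤ b - a := by
  rcases ha.eq_or_lt with rfl | ha
  · simpa using hb
  have hb : 0 < b := hb.lt_of_ne' fun h => ha.ne' (hab h)
  calc a * (log b - log a) = a * log (b / a) := by rw [log_div hb.ne' ha.ne']
    _ ≤ a * (b / a - 1) := by gcongr; exact log_le_sub_one_of_pos (by positivity)
    _ = b - a := by field_simp

theorem sum_negMulLog_le_sum_neg_mul_log {ι : Type*} [Fintype ι] {μ ν : ι → ℝ}
    (hμ : ∀ i, 0 ≤ μ i) (hν : ∀ i, 0 ≤ ν i) (hμν : ∀ i, ν i = 0 → μ i = 0)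
    (hsum : ∑ i, ν i ≤ ∑ i, μ i) :
    ∑ i, negMulLog (μ i) ≤ ∑ i, -(μ i * log (ν i)) := by
  have : ∑ i, μ i * (log (ν i) - log (μ i)) ≤ ∑ i, (ν i - μ i) :=
    Finset.sum_le_sum fun i _ => mul_log_sub_log_le_sub (hμ i) (hν i) (hμν i)
  simp only [mul_sub, Finset.sum_sub_distrib] at this
  simp only [negMulLog, neg_mul, Finset.sum_neg_distrib]
  linarith

theorem sum_negMulLog_le_sum_negMulLog_marginals {ι κ : Type*} [Fintype ι] [Fintype κ]
    {μ : ι × κ → ℝ} (hμ : ∀ x, 0 ≤ μ x) (hμ_sum : ∑ x, μ x = 1) :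
    ∑ x, negMulLog (μ x) ≤
      ∑ i, negMulLog (∑ k, μ (i, k)) + ∑ k, negMulLog (∑ i, μ (i, k)) := by
  set p : ι → ℝ := fun i => ∑ k, μ (i, k)
  set q : κ → ℝ := fun k => ∑ i, μ (i, k)
  have hp : ∀ i, 0 ≤ p i := fun i => Finset.sum_nonneg fun k _ => hμ _
  have hq : ∀ k, 0 ≤ q k := fun k => Finset.sum_nonneg fun i _ => hμ _
  have hp_sum : ∑ i, p i = 1 := by rw [← hμ_sum, Fintype.sum_prod_type]
  have hq_sum : ∑ k, q k = 1 := by rw [← hμ_sum, Fintype.sum_prod_type_right]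
  have hμ_le_p : ∀ x, μ x ≤ p x.1 := fun x =>
    Finset.single_le_sum (fun k _ => hμ (x.1, k)) (Finset.mem_univ x.2)
  have hμ_le_q : ∀ x, μ x ≤ q x.2 := fun x =>
    Finset.single_le_sum (fun i _ => hμ (i, x.2)) (Finset.mem_univ x.1)
  have gibbs := sum_negMulLog_le_sum_neg_mul_log (ν := fun x => p x.1 * q x.2) hμ
    (fun x => mul_nonneg (hp _) (hq _))
    (fun x hx => by
      rcases mul_eq_zero.mp hx with h | h
      · exact le_antisymm (h ▸ hμ_le_p x) (hμ x)
      · exact le_antisymm (h ▸ hμ_le_q x) (hμ x))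
    (by rw [Fintype.sum_prod_type, ← Fintype.sum_mul_sum, hp_sum, hq_sum, one_mul, hμ_sum])
  have log_prod : ∀ x, μ x * log (p x.1 * q x.2) = μ x * log (p x.1) + μ x * log (q x.2) := by
    intro x
    rcases (hμ x).eq_or_lt with h | h
    · simp [← h]
    · rw [log_mul (h.trans_le (hμ_le_p x)).ne' (h.trans_le (hμ_le_q x)).ne', mul_add]
  refine gibbs.trans_eq ?_
  simp only [log_prod, neg_add, Finset.sum_add_distrib]
  congr 1
  · simp [Fintype.sum_prod_type, negMulLog, Finset.sum_mul, p]
  · simp [Fintype.sum_prod_type_right, negMulLog, Finset.sum_mul, q]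

section PartialTrace

variable {m n : Type*}

theorem trSecond_eq_sum_submatrix [Fintype n] (X : Matrix (m × n) (m × n) ℂ) :
    trSecond X = ∑ k, X.submatrix (·, k) (·, k) := by
  ext i j
  simp [trSecond, Matrix.sum_apply]

theorem trFirst_eq_trSecond_submatrix_swap [Fintype m] (X : Matrix (m × n) (m × n) ℂ) :
    trFirst X = trSecond (X.submatrix Prod.swap Prod.swap) :=
  rfl

theorem Matrix.PosSemidef.trSecond [Fintype n] {X : Matrix (m × n) (m × n) ℂ}
    (hX : X.PosSemidef) : (trSecond X).PosSemidef := by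
  rw [trSecond_eq_sum_submatrix]
  exact posSemidef_sum _ fun k _ => hX.submatrix _

theorem Matrix.PosSemidef.trFirst [Fintype m] {X : Matrix (m × n) (m × n) ℂ}
    (hX : X.PosSemidef) : (trFirst X).PosSemidef :=
  (hX.submatrix Prod.swap).trSecond

theorem trace_trSecond [Fintype m] [Fintype n] (X : Matrix (m × n) (m × n) ℂ) :
    (trSecond X).trace = X.trace := by
  simp [Matrix.trace, trSecond, Fintype.sum_prod_type]

theorem trace_trFirst [Fintype m] [Fintype n] (X : Matrix (m × n) (m × n) ℂ) :
    (trFirst X).trace = X.trace := by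
  simp [Matrix.trace, trFirst, Fintype.sum_prod_type_right]

theorem trSecond_kronecker_one_mul_mul [Fintype m] [Fintype n] [DecidableEq n]
    (A B : Matrix m m ℂ) (X : Matrix (m × n) (m × n) ℂ) :
    trSecond ((A ⊗ₖ (1 : Matrix n n ℂ)) * X * (B ⊗ₖ (1 : Matrix n n ℂ))) =
      A * trSecond X * B := by
  ext i j
  simp only [trSecond, Matrix.mul_apply, kroneckerMap_apply, Matrix.one_apply, mul_ite, mul_one,
    mul_zero, ite_mul, zero_mul, Fintype.sum_prod_type, Finset.sum_ite_eq, Finset.mem_univ,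
    if_true, Finset.sum_mul, Finset.sum_ite_eq', Finset.mul_sum]
  rw [Finset.sum_comm]
  exact Finset.sum_congr rfl fun _ _ => Finset.sum_comm

theorem trSecond_one_kronecker_mul_mul [Fintype m] [Fintype n] [DecidableEq m]
    (B C : Matrix n n ℂ) (X : Matrix (m × n) (m × n) ℂ) :
    trSecond (((1 : Matrix m m ℂ) ⊗ₖ B) * X * ((1 : Matrix m m ℂ) ⊗ₖ C)) =
      trSecond (X * ((1 : Matrix m m ℂ) ⊗ₖ (C * B))) := by
  ext i j
  simp only [trSecond, Matrix.mul_apply, kroneckerMap_apply, Matrix.one_apply, ite_mul, one_mul,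
    zero_mul, Fintype.sum_prod_type, Finset.sum_ite_irrel, Finset.sum_const_zero,
    Finset.sum_ite_eq, Finset.mem_univ, if_true, mul_ite, Finset.sum_mul, mul_zero,
    Finset.sum_ite_eq', Finset.mul_sum]
  rw [Finset.sum_congr rfl fun _ _ => Finset.sum_comm, Finset.sum_comm]
  refine Finset.sum_congr rfl fun _ _ => ?_
  rw [Finset.sum_comm]
  exact Finset.sum_congr rfl fun _ _ => Finset.sum_congr rfl fun _ _ => by ring

theorem trSecond_conjTranspose_kronecker_mul_mul [Fintype m] [Fintype n] [DecidableEq m]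
    [DecidableEq n] (V : Matrix m m ℂ) {W : Matrix n n ℂ} (hW : W ∈ unitaryGroup n ℂ)
    (X : Matrix (m × n) (m × n) ℂ) :
    trSecond ((V ⊗ₖ W)ᴴ * X * (V ⊗ₖ W)) = Vᴴ * trSecond X * V := by
  have hsplit : (V ⊗ₖ W)ᴴ * X * (V ⊗ₖ W) =
      (Vᴴ ⊗ₖ (1 : Matrix n n ℂ)) * ((1 ⊗ₖ Wᴴ) * X * (1 ⊗ₖ W)) * (V ⊗ₖ (1 : Matrix n n ℂ)) := by
    have hleft : Vᴴ ⊗ₖ Wᴴ = (Vᴴ ⊗ₖ (1 : Matrix n n ℂ)) * ((1 : Matrix m m ℂ) ⊗ₖ Wᴴ) := by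
      rw [← mul_kronecker_mul, Matrix.mul_one, Matrix.one_mul]
    have hright : V ⊗ₖ W = ((1 : Matrix m m ℂ) ⊗ₖ W) * (V ⊗ₖ (1 : Matrix n n ℂ)) := by
      rw [← mul_kronecker_mul, Matrix.mul_one, Matrix.one_mul]
    rw [conjTranspose_kronecker, hleft, hright]
    simp only [Matrix.mul_assoc]
  have hWW : W * Wᴴ = 1 := mem_unitaryGroup_iff.mp hW
  rw [hsplit, trSecond_kronecker_one_mul_mul, trSecond_one_kronecker_mul_mul, hWW,
    one_kronecker_one, Matrix.mul_one]

theorem kronecker_submatrix_swap {R l p : Type*} [CommMagma R] (A : Matrix l m R)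
    (B : Matrix n p R) :
    (A ⊗ₖ B).submatrix Prod.swap Prod.swap = B ⊗ₖ A := by
  ext; simp [mul_comm]

theorem trFirst_conjTranspose_kronecker_mul_mul [Fintype m] [Fintype n] [DecidableEq m]
    [DecidableEq n] {V : Matrix m m ℂ} (hV : V ∈ unitaryGroup m ℂ) (W : Matrix n n ℂ)
    (X : Matrix (m × n) (m × n) ℂ) :
    trFirst ((V ⊗ₖ W)ᴴ * X * (V ⊗ₖ W)) = Wᴴ * trFirst X * W := by
  simp only [trFirst_eq_trSecond_submatrix_swap]
  rw [← trSecond_conjTranspose_kronecker_mul_mul W hV,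
    submatrix_mul _ _ _ Prod.swap _ Prod.swap_bijective,
    submatrix_mul _ _ _ Prod.swap _ Prod.swap_bijective, ← conjTranspose_submatrix,
    kronecker_submatrix_swap]

end PartialTrace

section Spectral

variable {n : Type*} [Fintype n] [DecidableEq n]

theorem Matrix.IsHermitian.conjTranspose_eigenvectorUnitary_mul_mul {A : Matrix n n ℂ}
    (hA : A.IsHermitian) :
    (hA.eigenvectorUnitary : Matrix n n ℂ)ᴴ * A * (hA.eigenvectorUnitary : Matrix n n ℂ) =
      diagonal (RCLike.ofReal ∘ hA.eigenvalues) := by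
  simpa [Unitary.conjStarAlgAut_star_apply, star_eq_conjTranspose] using
    hA.conjStarAlgAut_star_eigenvectorUnitary

theorem Matrix.IsHermitian.re_conjTranspose_eigenvectorUnitary_mul_mul_apply_self
    {A : Matrix n n ℂ} (hA : A.IsHermitian) (i : n) :
    (((hA.eigenvectorUnitary : Matrix n n ℂ)ᴴ * A * (hA.eigenvectorUnitary : Matrix n n ℂ))
      i i).re = hA.eigenvalues i := by
  simp [hA.conjTranspose_eigenvectorUnitary_mul_mul]

theorem normSq_mem_doublyStochastic {U : Matrix n n ℂ} (hU : U ∈ unitaryGroup n ℂ) :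
    Matrix.of (fun i j => Complex.normSq (U i j)) ∈ doublyStochastic ℝ n := by
  refine mem_doublyStochastic_iff_sum.mpr
    ⟨fun i j => Complex.normSq_nonneg _, fun i => ?_, fun j => ?_⟩
  · have := congrFun₂ (mem_unitaryGroup_iff.mp hU) i i
    simp only [Matrix.mul_apply, star_apply, RCLike.star_def, Complex.mul_conj,
      one_apply_eq] at this
    exact_mod_cast this
  · have := congrFun₂ (mem_unitaryGroup_iff'.mp hU) j j
    simp only [Matrix.mul_apply, star_apply, RCLike.star_def, ← Complex.normSq_eq_conj_mul_self,
      one_apply_eq] at this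
    exact_mod_cast this

theorem re_mul_diagonal_mul_conjTranspose_apply_self (M : Matrix n n ℂ) (d : n → ℝ) (i : n) :
    ((M * (diagonal (RCLike.ofReal ∘ d) : Matrix n n ℂ) * Mᴴ) i i).re =
      (Matrix.of (fun i j => Complex.normSq (M i j)) *ᵥ d) i := by
  rw [Matrix.mul_apply]
  simp only [mul_diagonal, conjTranspose_apply, Function.comp_apply, mulVec,
    dotProduct, of_apply, Complex.re_sum]
  refine Finset.sum_congr rfl fun j _ => ?_
  rw [mul_right_comm, Complex.star_def, Complex.mul_conj]
  simp

theorem Matrix.PosSemidef.sum_negMulLog_eigenvalues_le {A : Matrix n n ℂ} (hA : A.PosSemidef)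
    {Y : Matrix n n ℂ} (hY : Y ∈ unitaryGroup n ℂ) :
    ∑ j, negMulLog (hA.1.eigenvalues j) ≤ ∑ i, negMulLog ((Yᴴ * A * Y) i i).re := by
  set U : Matrix n n ℂ := (hA.1.eigenvectorUnitary : Matrix n n ℂ)
  have hM : Yᴴ * U ∈ unitaryGroup n ℂ :=
    Submonoid.mul_mem _ (Unitary.star_mem hY) hA.1.eigenvectorUnitary.2
  have hconj :
      Yᴴ * A * Y = (Yᴴ * U) * diagonal (RCLike.ofReal ∘ hA.1.eigenvalues) * (Yᴴ * U)ᴴ := by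
    conv_lhs => rw [hA.1.spectral_theorem]
    simp [Unitary.conjStarAlgAut_apply, star_eq_conjTranspose, Matrix.mul_assoc, U]
  simp only [hconj, re_mul_diagonal_mul_conjTranspose_apply_self]
  exact concaveOn_negMulLog.sum_le_sum_mulVec_of_mem_doublyStochastic
    (normSq_mem_doublyStochastic hM) fun j => hA.eigenvalues_nonneg j

end Spectral

theorem Matrix.IsHermitian.vnEntropy_eq {n : Type*} [Fintype n] [DecidableEq n]
    {A : Matrix n n ℂ} (hA : A.IsHermitian) :
    vnEntropy A = (∑ i, negMulLog (hA.eigenvalues i)) / log 2 := by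
  rw [vnEntropy, dif_pos hA, Finset.sum_div, ← Finset.sum_neg_distrib]
  refine Finset.sum_congr rfl fun i _ => ?_
  rw [negMulLog, ← log_div_log]
  ring

theorem vnEntropy_le_trSecond_add_trFirst {m n : Type*} [Fintype m] [Fintype n]
    [DecidableEq m] [DecidableEq n] {σ : Matrix (m × n) (m × n) ℂ} (hσ : σ.PosSemidef)
    (hσ_tr : σ.trace = 1) :
    vnEntropy σ ≤ vnEntropy (trSecond σ) + vnEntropy (trFirst σ) := by
  have hρ₁ := hσ.trSecond
  have hρ₂ := hσ.trFirst
  set V := hρ₁.1.eigenvectorUnitary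
  set W := hρ₂.1.eigenvectorUnitary
  set Y : Matrix (m × n) (m × n) ℂ := (V : Matrix m m ℂ) ⊗ₖ (W : Matrix n n ℂ)
  have hY : Y ∈ unitaryGroup (m × n) ℂ := kronecker_mem_unitary V.2 W.2
  set μ : m × n → ℝ := fun x => ((Yᴴ * σ * Y) x x).re
  have hμ : ∀ x, 0 ≤ μ x := fun x =>
    (Complex.le_def.mp ((hσ.conjTranspose_mul_mul_same Y).diag_nonneg (i := x))).1
  have hμ₁ : ∀ i, ∑ k, μ (i, k) = hρ₁.1.eigenvalues i := fun i => by
    rw [← hρ₁.1.re_conjTranspose_eigenvectorUnitary_mul_mul_apply_self,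
      ← trSecond_conjTranspose_kronecker_mul_mul _ W.2]
    simp [trSecond, μ, Y, V, Complex.re_sum]
  have hμ₂ : ∀ k, ∑ i, μ (i, k) = hρ₂.1.eigenvalues k := fun k => by
    rw [← hρ₂.1.re_conjTranspose_eigenvectorUnitary_mul_mul_apply_self,
      ← trFirst_conjTranspose_kronecker_mul_mul V.2]
    simp [trFirst, μ, Y, W, Complex.re_sum]
  have hμ_sum : ∑ x, μ x = 1 := by
    have := congrArg Complex.re (hρ₁.1.trace_eq_sum_eigenvalues)
    rw [trace_trSecond, hσ_tr, Complex.re_sum] at this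
    simp only [Fintype.sum_prod_type, hμ₁]
    simpa using this.symm
  rw [hσ.1.vnEntropy_eq, hρ₁.1.vnEntropy_eq, hρ₂.1.vnEntropy_eq, ← add_div]
  gcongr
  calc ∑ a, negMulLog (hσ.1.eigenvalues a) ≤ ∑ x, negMulLog (μ x) :=
        hσ.sum_negMulLog_eigenvalues_le hY
    _ ≤ _ := by
        simpa only [hμ₁, hμ₂] using sum_negMulLog_le_sum_negMulLog_marginals hμ hμ_sum

/-- For a density matrix `σ` on `ℂ^{d₁} ⊗ ℂ^{d₂}` with marginals
    `ρ₁ = tr₂ σ` and `ρ₂ = tr₁ σ`, we have `W(σ) ≥ W(ρ₁) + W(ρ₂)`, i.e.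
    `log₂(d₁ d₂) − S(σ) ≥ (log₂ d₁ − S(ρ₁)) + (log₂ d₂ − S(ρ₂))`: the accessible
    information `i(τ) = log₂ d − S(τ)` satisfies the hybrid monogamy relation
    `i(σ) ≥ i(ρ₁) + i(ρ₂)` (equivalently, subadditivity of the entropy). -/
theorem work_monogamy
    (d₁ d₂ : ℕ)
    (σ : Matrix (Fin d₁ × Fin d₂) (Fin d₁ × Fin d₂) ℂ)
    (hσ : σ.PosSemidef) (hσtr : σ.trace = 1)
    (ρ₁ : Matrix (Fin d₁) (Fin d₁) ℂ) (hρ₁ : ρ₁ = trSecond σ)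
    (ρ₂ : Matrix (Fin d₂) (Fin d₂) ℂ) (hρ₂ : ρ₂ = trFirst σ) :
    Real.logb 2 ((d₁ : ℝ) * d₂) - vnEntropy σ ≥
      (Real.logb 2 (d₁ : ℝ) - vnEntropy ρ₁) +
      (Real.logb 2 (d₂ : ℝ) - vnEntropy ρ₂) := by
  have hd : d₁ ≠ 0 ∧ d₂ ≠ 0 := by
    constructor <;> rintro rfl <;> simp [Matrix.trace] at hσtr
  rw [logb_mul (by exact_mod_cast hd.1) (by exact_mod_cast hd.2), hρ₁, hρ₂]
  linarith [vnEntropy_le_trSecond_add_trFirst hσ hσtr]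
end

section
/- Let |w₁⟩ = |0⟩, |w₂⟩ = (1/2)|0⟩ + (√3/2)|1⟩, |w₃⟩ = (1/2)|0⟩ − (√3/2)|1⟩ in ℂ², and let {|1⟩,|2⟩,|3⟩} be the standard basis of ℂ³. Then the three vectors |w_k⟩⊗|k⟩ ∈ ℂ²⊗ℂ³ (k = 1,2,3) are orthonormal, and consequently σ_RSP = (1/3)∑_{k=1}^3 (|w_k⟩⟨w_k| ⊗ |k⟩⟨k|) ⊗ (|w_k⟩⟨w_k| ⊗ |k⟩⟨k|) is a classical state on (ℂ²⊗ℂ³)⊗(ℂ²⊗ℂ³). -/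
/-!
The vectors `v k = w k ⊗ eₖ` are orthonormal because they live in different blocks `ℂ² ⊗ eₖ`
and each `w k` is a unit vector. Completing `w k` to the orthonormal basis `w k, (w k)⊥` of `ℂ²`
inside each block gives an orthonormal basis `α` of `ℂ² ⊗ ℂ³` containing all the `v k`, and
`σ_RSP` is diagonal in the product basis `α ⊗ α`, with weight `1/3` on each `v k ⊗ v k`.
-/

open Matrix Kronecker BigOperators ComplexOrder

def OrthonormalVecs {ι n R : Type*} [Fintype n] [DecidableEq ι] [CommSemiring R] [StarRing R]
    (u : ι → n → R) : Prop :=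
  ∀ i j, star (u i) ⬝ᵥ u j = if i = j then 1 else 0

theorem OrthonormalVecs.comp {ι κ n R : Type*} [Fintype n] [DecidableEq ι] [DecidableEq κ]
    [CommSemiring R] [StarRing R] {u : ι → n → R} (hu : OrthonormalVecs u) {f : κ → ι}
    (hf : Function.Injective f) : OrthonormalVecs (u ∘ f) := fun i j =>
  (hu (f i) (f j)).trans (by simp only [hf.eq_iff])

def perpVec {R : Type*} [CommRing R] [StarRing R] (x : Fin 2 → R) : Fin 2 → R :=
  ![-star (x 1), star (x 0)]

theorem orthonormalVecs_perpVec {R : Type*} [CommRing R] [StarRing R] {x : Fin 2 → R}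
    (hx : star x ⬝ᵥ x = 1) : OrthonormalVecs ![x, perpVec x] := by
  obtain ⟨hperp, hperp', hnorm⟩ : star x ⬝ᵥ perpVec x = 0 ∧ star (perpVec x) ⬝ᵥ x = 0 ∧
      star (perpVec x) ⬝ᵥ perpVec x = star x ⬝ᵥ x := by
    refine ⟨?_, ?_, ?_⟩ <;>
    · simp only [perpVec, dotProduct, Fin.sum_univ_two, Pi.star_apply, cons_val_zero,
        cons_val_one, cons_val_fin_one, star_neg, star_star]
      ring
  intro i j
  fin_cases i <;> fin_cases j <;> simp [hx, hperp, hperp', hnorm]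

/-- The vectors `u k i ⊗ eₖ` of `R^m ⊗ R^κ`. -/
def blockVecs {ι κ m R : Type*} [DecidableEq κ] [Semiring R] (u : κ → ι → m → R) :
    ι × κ → m × κ → R :=
  fun a q => u a.2 a.1 q.1 * if q.2 = a.2 then 1 else 0

theorem star_blockVecs_dotProduct {ι κ m R : Type*} [Fintype m] [Fintype κ] [DecidableEq κ]
    [CommSemiring R] [StarRing R] (u : κ → ι → m → R) (i j : ι) (k l : κ) :
    star (blockVecs u (i, k)) ⬝ᵥ blockVecs u (j, l) =
      if k = l then star (u k i) ⬝ᵥ u k j else 0 := by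
  by_cases h : k = l <;>
  simp [blockVecs, dotProduct, Fintype.sum_prod_type, h, apply_ite, mul_comm,
    eq_comm (a := l)]

theorem OrthonormalVecs.blockVecs {ι κ m R : Type*} [Fintype m] [Fintype κ] [DecidableEq ι]
    [DecidableEq κ] [CommSemiring R] [StarRing R] {u : κ → ι → m → R}
    (hu : ∀ k, OrthonormalVecs (u k)) : OrthonormalVecs (blockVecs u) := by
  rintro ⟨i, k⟩ ⟨j, l⟩
  rw [star_blockVecs_dotProduct]
  by_cases hkl : k = l
  · subst hkl; simp [hu k i j]
  · simp [hkl]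

theorem isClassicalState_sum_kronecker_self {n : Type*} [Fintype n] [DecidableEq n]
    {α : n → n → ℂ} (hα : OrthonormalVecs α) {p : n → ℝ} (hp0 : ∀ a, 0 ≤ p a)
    (hp1 : ∑ a, p a = 1) :
    IsClassicalState (∑ a, (p a : ℂ) •
      (vecMulVec (α a) (star (α a)) ⊗ₖ vecMulVec (α a) (star (α a)))) := by
  refine ⟨α, α, fun a b => if a = b then p a else 0, hα, hα,
    fun a b => by dsimp only; split_ifs <;> simp [hp0], by simpa using hp1, ?_⟩
  simp [apply_ite, ite_smul]

/-- With `|w₁⟩ = |0⟩`, `|w₂⟩ = (1/2)|0⟩ + (√3/2)|1⟩`,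
    `|w₃⟩ = (1/2)|0⟩ − (√3/2)|1⟩` in `ℂ²` and `{|1⟩,|2⟩,|3⟩}` the standard basis of
    `ℂ³`, the three vectors `|w_k⟩ ⊗ |k⟩ ∈ ℂ² ⊗ ℂ³` are orthonormal, and consequently
    `σ_RSP = (1/3) ∑_k (|w_k⟩⟨w_k| ⊗ |k⟩⟨k|) ⊗ (|w_k⟩⟨w_k| ⊗ |k⟩⟨k|)` is a classical
    state on `(ℂ² ⊗ ℂ³) ⊗ (ℂ² ⊗ ℂ³)`. -/
theorem sigmaRSP_is_classical
    (w : Fin 3 → Fin 2 → ℂ)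
    (hw0 : w 0 = ![1, 0])
    (hw1 : w 1 = ![1 / 2, ((Real.sqrt 3 / 2 : ℝ) : ℂ)])
    (hw2 : w 2 = ![1 / 2, -((Real.sqrt 3 / 2 : ℝ) : ℂ)])
    (v : Fin 3 → (Fin 2 × Fin 3) → ℂ)
    (hv : v = fun k q => w k q.1 * (if q.2 = k then 1 else 0))
    (σRSP : Matrix ((Fin 2 × Fin 3) × (Fin 2 × Fin 3))
                   ((Fin 2 × Fin 3) × (Fin 2 × Fin 3)) ℂ)
    (hσ : σRSP = ((1 : ℂ) / 3) • ∑ k,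
        vecMulVec (v k) (star (v k)) ⊗ₖ vecMulVec (v k) (star (v k))) :
    (∀ k l, star (v k) ⬝ᵥ v l = if k = l then (1 : ℂ) else 0) ∧
    IsClassicalState σRSP := by
  have hsqrt : ((Real.sqrt 3 : ℝ) : ℂ) ^ 2 = 3 := by
    rw [← Complex.ofReal_pow, Real.sq_sqrt (by norm_num)]; norm_num
  have hunit : ∀ k, star (w k) ⬝ᵥ w k = 1 := by
    intro k
    fin_cases k <;>
    simp only [Fin.zero_eta, Fin.mk_one, Fin.reduceFinMk, hw0, hw1, hw2, dotProduct,
      Fin.sum_univ_two, Pi.star_apply, RCLike.star_def, cons_val_zero, cons_val_one,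
      cons_val_fin_one, map_one, map_zero, map_neg, map_div₀, map_ofNat,
      Complex.conj_ofReal, Complex.ofReal_div, Complex.ofReal_ofNat] <;>
    [norm_num; linear_combination hsqrt / 4; linear_combination hsqrt / 4]
  set α : Fin 2 × Fin 3 → Fin 2 × Fin 3 → ℂ := blockVecs fun k => ![w k, perpVec (w k)]
  have hα : OrthonormalVecs α := .blockVecs fun k => orthonormalVecs_perpVec (hunit k)
  have hvα : v = α ∘ (Prod.mk 0) := by subst hv; rfl
  refine ⟨hvα ▸ hα.comp (Prod.mk_right_injective 0), ?_⟩
  have hσα : σRSP = ∑ a, ((if a.1 = 0 then 1 / 3 else 0 : ℝ) : ℂ) •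
      (vecMulVec (α a) (star (α a)) ⊗ₖ vecMulVec (α a) (star (α a))) := by
    simp [hσ, hvα, Fintype.sum_prod_type, Finset.smul_sum, -Complex.coe_smul]
  rw [hσα]
  exact isClassicalState_sum_kronecker_self hα (fun a => by split_ifs <;> norm_num)
    (by simp [Fintype.sum_prod_type])
end

section
/- Let |w₁⟩ = |0⟩, |w₂⟩ = (1/2)|0⟩ + (√3/2)|1⟩, |w₃⟩ = (1/2)|0⟩ − (√3/2)|1⟩ in ℂ², let {|1⟩,|2⟩,|3⟩} be the standard basis of ℂ³, and let σ_RSP = (1/3)∑_{k=1}^3 (|w_k⟩⟨w_k| ⊗ |k⟩⟨k|) ⊗ (|w_k⟩⟨w_k| ⊗ |k⟩⟨k|) on the 36-dimensional space (ℂ²⊗ℂ³)⊗(ℂ²⊗ℂ³). Then the von Neumann entropy of σ_RSP is S(σ_RSP) = log₂ 3, and hence the maximal extractable work from σ_RSP is W(σ_RSP) = log₂ 36 − log₂ 3 = log₂ 12. -/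
/-!
Each `|w_k⟩ ⊗ |k⟩` is a unit vector and the tags `|k⟩` make them pairwise orthogonal, so the
vectors `(|w_k⟩ ⊗ |k⟩) ⊗ (|w_k⟩ ⊗ |k⟩)` are orthonormal and `σ_RSP` is the uniform mixture of
three orthogonal pure states. Such a mixture `σ = (1/m) P`, with `P` a projection, satisfies
`σ² = σ / m`, so its eigenvalues lie in `{0, 1/m}`; as they sum to `tr σ = 1`, the entropy is
`−∑ λ log₂ λ = −log₂ (1/m) = log₂ m`.
-/

open Matrix Kronecker BigOperators ComplexOrder

namespace Matrix

section Spectrum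

variable {n : Type*} [Fintype n] [DecidableEq n] {A : Matrix n n ℂ}

theorem IsHermitian.eigenvalues_eq_zero_or_of_mul_self_eq_smul (hA : A.IsHermitian) {c : ℝ}
    (h : A * A = (c : ℂ) • A) (i : n) : hA.eigenvalues i = 0 ∨ hA.eigenvalues i = c := by
  set x := ⇑(hA.eigenvectorBasis i)
  set μ := hA.eigenvalues i
  have hx : x ≠ 0 := (WithLp.ofLp_eq_zero 2).ne.2 (hA.eigenvectorBasis.orthonormal.ne_zero i)
  have hAx : A *ᵥ x = (μ : ℂ) • x := by
    rw [hA.mulVec_eigenvectorBasis i, ← Complex.coe_smul]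
  have key : ((μ * μ : ℝ) : ℂ) • x = ((c * μ : ℝ) : ℂ) • x := by
    calc ((μ * μ : ℝ) : ℂ) • x = A *ᵥ (A *ᵥ x) := by
          rw [hAx, mulVec_smul, hAx, smul_smul]; push_cast; rfl
      _ = ((c * μ : ℝ) : ℂ) • x := by
          rw [mulVec_mulVec, h, smul_mulVec, hAx, smul_smul]; push_cast; rfl
  have hμ : μ * μ = c * μ := by exact_mod_cast smul_left_injective ℂ hx key
  rcases mul_eq_mul_right_iff.mp hμ with hμc | hμ0
  · exact Or.inr hμc
  · exact Or.inl hμ0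

theorem IsHermitian.sum_eigenvalues_eq_re_trace (hA : A.IsHermitian) :
    ∑ i, hA.eigenvalues i = A.trace.re := by
  simp [hA.trace_eq_sum_eigenvalues]

theorem vnEntropy_of_mul_self_eq_smul (hA : A.IsHermitian) {c : ℝ} (h : A * A = (c : ℂ) • A) :
    vnEntropy A = -Real.logb 2 c * A.trace.re := by
  have hterm : ∀ i, hA.eigenvalues i * Real.logb 2 (hA.eigenvalues i)
      = hA.eigenvalues i * Real.logb 2 c := fun i => by
    rcases hA.eigenvalues_eq_zero_or_of_mul_self_eq_smul h i with h0 | hc <;> simp [*]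
  rw [vnEntropy, dif_pos hA, Finset.sum_congr rfl fun i _ => hterm i, ← Finset.sum_mul,
    hA.sum_eigenvalues_eq_re_trace]
  ring

end Spectrum

section Orthonormal

variable {ι m n : Type*} [DecidableEq ι]

theorem vecMulVec_star_kronecker_vecMulVec_star (a : m → ℂ) (b : n → ℂ) :
    vecMulVec a (star a) ⊗ₖ vecMulVec b (star b) =
      vecMulVec (fun p => a p.1 * b p.2) (star fun p => a p.1 * b p.2) := by
  ext p q
  simp only [kroneckerMap_apply, vecMulVec_apply, Pi.star_apply, star_mul']
  ring

variable [Fintype m] [Fintype n]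

def IsOrthonormalFamily (u : ι → n → ℂ) : Prop :=
  ∀ k l, star (u k) ⬝ᵥ u l = if k = l then 1 else 0

theorem IsOrthonormalFamily.isIdempotentElem_sum_vecMulVec [Fintype ι] {u : ι → n → ℂ}
    (hu : IsOrthonormalFamily u) : IsIdempotentElem (∑ k, vecMulVec (u k) (star (u k))) := by
  unfold IsOrthonormalFamily at hu
  simp [IsIdempotentElem, Finset.sum_mul, Finset.mul_sum, vecMulVec_mul_vecMulVec, hu, ite_smul,
    apply_ite (vecMulVec _)]

theorem IsOrthonormalFamily.vnEntropy_uniform_mixture [Fintype ι] [Nonempty ι] [DecidableEq n]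
    {u : ι → n → ℂ} (hu : IsOrthonormalFamily u) :
    vnEntropy ((1 / Fintype.card ι : ℂ) • ∑ k, vecMulVec (u k) (star (u k))) =
      Real.logb 2 (Fintype.card ι) := by
  set P := ∑ k, vecMulVec (u k) (star (u k))
  have hc : (1 / Fintype.card ι : ℂ) = ((1 / Fintype.card ι : ℝ) : ℂ) := by push_cast; rfl
  have hP : P.IsHermitian :=
    isSelfAdjoint_sum _ fun k _ => (posSemidef_vecMulVec_self_star (u k)).isHermitian
  have hA : ((1 / Fintype.card ι : ℂ) • P).IsHermitian := hP.smul (by simp [IsSelfAdjoint])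
  have hsq : ((1 / Fintype.card ι : ℂ) • P) * ((1 / Fintype.card ι : ℂ) • P) =
      ((1 / Fintype.card ι : ℝ) : ℂ) • ((1 / Fintype.card ι : ℂ) • P) := by
    rw [smul_mul_smul_comm, hu.isIdempotentElem_sum_vecMulVec.eq, ← hc, smul_smul]
  have htr : ((1 / Fintype.card ι : ℂ) • P).trace.re = 1 := by
    simp [P, trace_sum, dotProduct_comm _ (star _), hu _ _]
  rw [vnEntropy_of_mul_self_eq_smul hA hsq, htr, one_div, Real.logb_inv]
  ring

theorem dotProduct_mul_mul (a c : m → ℂ) (b d : n → ℂ) :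
    (fun p : m × n => a p.1 * b p.2) ⬝ᵥ (fun p => c p.1 * d p.2) = (a ⬝ᵥ c) * (b ⬝ᵥ d) := by
  simp only [dotProduct, Finset.sum_mul_sum]
  exact Fintype.sum_prod_type _ |>.trans <|
    Finset.sum_congr rfl fun i _ => Finset.sum_congr rfl fun j _ => by ring

theorem IsOrthonormalFamily.mul_self {u : ι → n → ℂ} (hu : IsOrthonormalFamily u) :
    IsOrthonormalFamily fun k (p : n × n) => u k p.1 * u k p.2 := by
  intro k l
  have hstar : star (fun p : n × n => u k p.1 * u k p.2) =
      fun p => star (u k) p.1 * star (u k) p.2 := by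
    ext p; simp
  rw [hstar, dotProduct_mul_mul, hu]
  split_ifs <;> simp

theorem isOrthonormalFamily_tagged [Fintype ι] {w : ι → m → ℂ}
    (hw : ∀ k, star (w k) ⬝ᵥ w k = 1) :
    IsOrthonormalFamily fun k (q : m × ι) => w k q.1 * if q.2 = k then 1 else 0 := by
  intro k l
  by_cases hkl : k = l
  · subst hkl
    simpa [dotProduct, Fintype.sum_prod_type] using hw k
  · simp [dotProduct, Fintype.sum_prod_type, Ne.symm hkl, hkl]

end Orthonormal

end Matrix

/-- With `|w₁⟩ = |0⟩`, `|w₂⟩ = (1/2)|0⟩ + (√3/2)|1⟩`,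
    `|w₃⟩ = (1/2)|0⟩ − (√3/2)|1⟩` in `ℂ²`, `{|1⟩,|2⟩,|3⟩}` the standard basis of `ℂ³`,
    and `σ_RSP = (1/3) ∑_k (|w_k⟩⟨w_k| ⊗ |k⟩⟨k|) ⊗ (|w_k⟩⟨w_k| ⊗ |k⟩⟨k|)` on the
    36-dimensional space `(ℂ² ⊗ ℂ³) ⊗ (ℂ² ⊗ ℂ³)`, the von Neumann entropy is
    `S(σ_RSP) = log₂ 3`, hence the maximal extractable work is
    `W(σ_RSP) = log₂ 36 − log₂ 3 = log₂ 12`. -/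
theorem sigmaRSP_entropy_and_work
    (w : Fin 3 → Fin 2 → ℂ)
    (hw0 : w 0 = ![1, 0])
    (hw1 : w 1 = ![1 / 2, ((Real.sqrt 3 / 2 : ℝ) : ℂ)])
    (hw2 : w 2 = ![1 / 2, -((Real.sqrt 3 / 2 : ℝ) : ℂ)])
    (v : Fin 3 → (Fin 2 × Fin 3) → ℂ)
    (hv : v = fun k q => w k q.1 * (if q.2 = k then 1 else 0))
    (σRSP : Matrix ((Fin 2 × Fin 3) × (Fin 2 × Fin 3))
                   ((Fin 2 × Fin 3) × (Fin 2 × Fin 3)) ℂ)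
    (hσ : σRSP = ((1 : ℂ) / 3) • ∑ k,
        vecMulVec (v k) (star (v k)) ⊗ₖ vecMulVec (v k) (star (v k))) :
    vnEntropy σRSP = Real.logb 2 3 ∧
    Real.logb 2 36 - vnEntropy σRSP = Real.logb 2 12 := by
  have hsqrt3 : ((Real.sqrt 3 : ℝ) : ℂ) * (Real.sqrt 3 : ℝ) = 3 := by
    rw [← Complex.ofReal_mul, Real.mul_self_sqrt (by norm_num)]; norm_num
  have hw : ∀ k, star (w k) ⬝ᵥ w k = 1 := by
    intro k
    fin_cases k <;> simp [hw0, hw1, hw2, dotProduct, Fin.sum_univ_two, Complex.conj_ofReal,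
      map_ofNat] <;> linear_combination (1 / 4 : ℂ) * hsqrt3
  have hS : vnEntropy σRSP = Real.logb 2 3 := by
    have := (isOrthonormalFamily_tagged hw).mul_self.vnEntropy_uniform_mixture
    simpa [hσ, hv, vecMulVec_star_kronecker_vecMulVec_star] using this
  refine ⟨hS, ?_⟩
  rw [hS, ← Real.logb_div (by norm_num) (by norm_num)]
  norm_num
end
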